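/- For every integer n ≥ 2 with distinct prime divisors p₁, p₂, …, p_m, the difference T*(n) = T(n) − T(n−1) satisfies the inclusion–exclusion formula T*(n) = Σ_{i} T(n/p_i) − Σ_{i<j} T(n/(p_i p_j)) + ⋯ + (−1)^{m−1} T(n/(p₁p₂⋯p_m)); equivalently, T(n) − T(n−1) = Σ_{d | n, d > 1, d squarefree} (−1)^{ω(d)+1} T(n/d), where ω(d) is the number of distinct prime factors of d. -/

import Mathlib

/-- `f (a₁,…,a_k)` defined by `f(a₁) = a₁`, `f(a₁,…,a_{i+1}) = (f(a₁,…,a_i) + 1) · a_{i+1}`. -/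
def f (l : List ℕ) : ℕ := l.foldl (fun acc a => (acc + 1) * a) 0

/-- `T n` is the number of nonempty finite sequences of positive integers with `f A = n`,
with the additional convention `T 0 = 1`. -/
noncomputable def T : ℕ → ℕ
  | 0 => 1
  | n + 1 => Nat.card {l : List ℕ // l ≠ [] ∧ (∀ a ∈ l, 0 < a) ∧ f l = n + 1}

/-!
A sequence with `f = m ≥ 1` is a sequence `A` followed by a last entry `a`, with
`(f A + 1) * a = m`; so `a ∣ m` and `f A = m / a - 1`, where the empty `A` accounts for the
convention `T 0 = 1`. Hence `T m = ∑_{d ∣ m} T (d - 1)`, and Möbius inversion gives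
`T (n - 1) = ∑_{d ∣ n} μ d * T (n / d)`. Splitting off `d = 1` and using
`-μ d = (-1) ^ (ω d + 1)` for squarefree `d` yields the formula.
-/

open ArithmeticFunction Finset
open scoped ArithmeticFunction.Moebius

@[simp]
lemma f_nil : f [] = 0 := rfl

@[simp]
lemma f_append_singleton (l : List ℕ) (a : ℕ) : f (l ++ [a]) = (f l + 1) * a := by
  simp [f]

lemma sum_le_f {l : List ℕ} (hl : ∀ a ∈ l, 0 < a) : l.sum ≤ f l := by
  induction l using List.reverseRecOn with
  | nil => simp
  | append_singleton l a ih =>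
    have ha : 0 < a := hl a (by simp)
    have ih := ih fun b hb => hl b (by simp [hb])
    simp only [List.sum_append, List.sum_singleton, f_append_singleton]
    nlinarith

-- By `sum_le_f`, every such sequence is a composition of some `j ≤ k`.
lemma finite_setOf_f_eq (k : ℕ) : {l : List ℕ | (∀ a ∈ l, 0 < a) ∧ f l = k}.Finite := by
  refine ((Set.finite_Iic k).biUnion fun j _ =>
    Set.finite_range (Composition.blocks : Composition j → List ℕ)).subset ?_
  rintro l ⟨hl, rfl⟩
  exact Set.mem_biUnion (x := l.sum) (sum_le_f hl) ⟨⟨l, hl _, rfl⟩, rfl⟩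

noncomputable def fFiber (k : ℕ) : Finset (List ℕ) := (finite_setOf_f_eq k).toFinset

lemma mem_fFiber {k : ℕ} {l : List ℕ} : l ∈ fFiber k ↔ (∀ a ∈ l, 0 < a) ∧ f l = k := by
  simp [fFiber]

lemma nil_mem_fFiber_iff {k : ℕ} : [] ∈ fFiber k ↔ k = 0 := by
  simp [mem_fFiber, eq_comm]

lemma append_singleton_mem_fFiber_iff {l : List ℕ} {a m : ℕ} (hm : 0 < m) :
    l ++ [a] ∈ fFiber m ↔ a ∣ m ∧ l ∈ fFiber (m / a - 1) := by
  simp only [mem_fFiber, List.mem_append, List.mem_singleton, f_append_singleton]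
  constructor
  · rintro ⟨hpos, rfl⟩
    have ha : 0 < a := hpos a (Or.inr rfl)
    exact ⟨dvd_mul_left _ _, fun b hb => hpos b (Or.inl hb), by simp [ha]⟩
  · rintro ⟨⟨q, rfl⟩, hpos, hfl⟩
    have ha : 0 < a := Nat.pos_of_mul_pos_right hm
    have hq : 0 < q := Nat.pos_of_mul_pos_left hm
    refine ⟨?_, ?_⟩
    · rintro b (hb | rfl)
      exacts [hpos b hb, ha]
    · rw [mul_div_cancel_left₀ q ha.ne'] at hfl
      rw [hfl, Nat.sub_add_cancel hq, mul_comm]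

lemma fFiber_zero : fFiber 0 = {[]} := by
  ext l
  rcases l.eq_nil_or_concat' with rfl | ⟨l, a, rfl⟩
  · simp [nil_mem_fFiber_iff]
  · simp only [mem_fFiber, f_append_singleton, List.mem_append, List.mem_singleton]
    simpa using fun h => (h a (Or.inr rfl)).ne'

lemma T_eq_card_fFiber (k : ℕ) : T k = #(fFiber k) := by
  cases k with
  | zero => simp [T, fFiber_zero]
  | succ n =>
    have hne : ∀ l : List ℕ, f l = n + 1 → l ≠ [] := by rintro _ h rfl; simp at h
    rw [T, fFiber, ← Nat.card_eq_card_finite_toFinset]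
    exact Nat.card_congr <| Equiv.subtypeEquivRight fun l =>
      and_iff_right_of_imp fun h => hne l h.2

lemma card_fFiber_eq_sum {m : ℕ} (hm : 0 < m) :
    #(fFiber m) = ∑ a ∈ m.divisors, #(fFiber (m / a - 1)) := by
  rw [← card_sigma]
  symm
  refine card_bij (fun p _ => p.2 ++ [p.1]) ?_ ?_ ?_
  · rintro ⟨a, l⟩ h
    simp_all [append_singleton_mem_fFiber_iff hm]
  · rintro ⟨a, l⟩ - ⟨b, l'⟩ - h
    obtain ⟨rfl, rfl⟩ : l = l' ∧ a = b := by simpa using h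
    rfl
  · intro l hl
    rcases l.eq_nil_or_concat' with rfl | ⟨l, a, rfl⟩
    · simp [nil_mem_fFiber_iff] at hl; omega
    · refine ⟨⟨a, l⟩, ?_, rfl⟩
      simp_all [append_singleton_mem_fFiber_iff hm, hm.ne']

lemma T_eq_sum_divisors {m : ℕ} (hm : 0 < m) : T m = ∑ d ∈ m.divisors, T (d - 1) := by
  simp only [T_eq_card_fFiber, card_fFiber_eq_sum hm]
  exact Nat.sum_div_divisors m fun d => #(fFiber (d - 1))

lemma sum_divisors_moebius_mul_T {n : ℕ} (hn : 0 < n) :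
    ∑ d ∈ n.divisors, (μ d : ℤ) * T (n / d) = T (n - 1) := by
  have := (sum_eq_iff_sum_mul_moebius_eq (f := fun d => (T (d - 1) : ℤ))
    (g := fun m => (T m : ℤ))).1 (fun m hm => by exact_mod_cast (T_eq_sum_divisors hm).symm) n hn
  simpa [Nat.sum_divisorsAntidiagonal (fun a b => (μ a : ℤ) * T b)] using this

lemma moebius_eq_neg_one_pow_card_primeFactors {d : ℕ} (hd : Squarefree d) :
    μ d = (-1) ^ d.primeFactors.card := by
  rw [moebius_apply_of_squarefree hd,
    ← (cardDistinctFactors_eq_cardFactors_iff_squarefree hd.ne_zero).2 hd,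
    cardDistinctFactors_apply, ← List.card_toFinset, Nat.toFinset_factors]

lemma neg_moebius_eq_ite (d : ℕ) :
    -(μ d : ℤ) = if Squarefree d then (-1) ^ (d.primeFactors.card + 1) else 0 := by
  split_ifs with hd
  · rw [moebius_eq_neg_one_pow_card_primeFactors hd, pow_succ, mul_neg_one]
  · rw [moebius_eq_zero_of_not_squarefree hd, neg_zero]

theorem Tstar_inclusion_exclusion (n : ℕ) (hn : 2 ≤ n) :
    (T n : ℤ) - T (n - 1) =
      ∑ d ∈ n.divisors.filter (fun d => 1 < d ∧ Squarefree d),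
        (-1 : ℤ) ^ (d.primeFactors.card + 1) * (T (n / d) : ℤ) := by
  calc (T n : ℤ) - T (n - 1) = ∑ d ∈ n.divisors.erase 1, -(μ d : ℤ) * T (n / d) := by
        rw [← sum_divisors_moebius_mul_T (by omega),
          ← add_sum_erase _ _ (Nat.one_mem_divisors.2 (by omega))]
        simp [sum_neg_distrib]
    _ = ∑ d ∈ n.divisors.erase 1,
          if Squarefree d then (-1 : ℤ) ^ (d.primeFactors.card + 1) * T (n / d) else 0 :=
        sum_congr rfl fun d _ => by rw [neg_moebius_eq_ite, ite_mul, zero_mul]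
    _ = _ := by
        rw [← sum_filter]
        congr 1
        ext d
        simp only [mem_filter, mem_erase]
        refine ⟨fun ⟨⟨hd1, hd⟩, hsq⟩ => ⟨hd, ?_, hsq⟩, fun ⟨hd, hd1, hsq⟩ => ⟨⟨hd1.ne', hd⟩, hsq⟩⟩
        have := Nat.pos_of_mem_divisors hd
        omega
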